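/- arXiv:2209.12315 — 2 statements merged into one kernel-verified Lean document; each statement's English description precedes it below -/
import Mathlib

section
/- Let G be a finite simple graph, let 𝒯 = (T, {X_t}_{t∈V(T)}) be a tree decomposition of G, and let ℋ = {H_j}_{j∈J} be a finite family of connected non-null subgraphs of G. For each node t of T let X'_t = {j ∈ J : V(H_j) ∩ X_t ≠ ∅}. Then 𝒯' = (T, {X'_t}_{t∈V(T)}) is a tree decomposition of the graph G(ℋ), and α(𝒯') ≤ α(𝒯). -/
open SimpleGraph

variable {V : Type*}

/-- The `k`-th power of a graph: distinct vertices are adjacent iff their distance is at most `k`. -/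
def SimpleGraph.power (G : SimpleGraph V) (k : ℕ) : SimpleGraph V where
  Adj u v := u ≠ v ∧ G.Reachable u v ∧ G.dist u v ≤ k
  symm := ⟨by
    rintro u v ⟨h1, h2, h3⟩
    exact ⟨h1.symm, h2.symm, by rwa [SimpleGraph.dist_comm]⟩⟩
  loopless := ⟨fun u h => h.1 rfl⟩

/-- A set of vertices is independent if it is pairwise non-adjacent. -/
def SimpleGraph.IsIndepSetOn (G : SimpleGraph V) (s : Set V) : Prop :=
  s.Pairwise fun u v => ¬ G.Adj u v

/-- The independence number of the subgraph of `G` induced by `X`. -/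
noncomputable def indepNumOn (G : SimpleGraph V) (X : Set V) : ℕ :=
  sSup {n | ∃ S : Finset V, ↑S ⊆ X ∧ G.IsIndepSetOn ↑S ∧ S.card = n}

/-- `(T, X)` is a tree decomposition of `G`. -/
structure IsTreeDecompOn {ι : Type*} (G : SimpleGraph V) (T : SimpleGraph ι) (X : ι → Set V) :
    Prop where
  isTree : T.IsTree
  exists_bag : ∀ v : V, ∃ t, v ∈ X t
  exists_bag_edge : ∀ ⦃u v : V⦄, G.Adj u v → ∃ t, u ∈ X t ∧ v ∈ X t
  subtree_connected : ∀ v : V, (T.induce {t | v ∈ X t}).Connected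

/-- The independence number of a tree decomposition with bags `X`. -/
noncomputable def decompIndepNum {ι : Type*} (G : SimpleGraph V) (X : ι → Set V) : ℕ :=
  ⨆ t, indepNumOn G (X t)

/-- The tree-independence number: the minimum independence number over all tree decompositions. -/
noncomputable def treeIndepNum (G : SimpleGraph V) : ℕ :=
  sInf {n | ∃ (ι : Type) (T : SimpleGraph ι) (X : ι → Set V),
    Finite ι ∧ IsTreeDecompOn G T X ∧ decompIndepNum G X = n}

/-- The graph `G(ℋ)` on the index set of a family of (vertex sets of) subgraphs of `G`:
two distinct indices are adjacent iff the subgraphs share a vertex or are joined by an edge. -/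
def packingGraph {J : Type*} (G : SimpleGraph V) (S : J → Set V) : SimpleGraph J where
  Adj i j := i ≠ j ∧ ((S i ∩ S j).Nonempty ∨ ∃ u ∈ S i, ∃ v ∈ S j, G.Adj u v)
  symm := ⟨by
    rintro i j ⟨hne, h⟩
    refine ⟨hne.symm, ?_⟩
    rcases h with ⟨x, hx⟩ | ⟨u, hu, v, hv, huv⟩
    · exact Or.inl ⟨x, hx.2, hx.1⟩
    · exact Or.inr ⟨v, hv, u, hu, huv.symm⟩⟩
  loopless := ⟨fun i h => h.1 rfl⟩

/-- A graph is chordal if it has no induced cycle of length at least four. -/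
def IsChordal (G : SimpleGraph V) : Prop :=
  ∀ n : ℕ, 4 ≤ n → ∀ s : Set V, IsEmpty (G.induce s ≃g cycleGraph n)

/-!
A connected subgraph `H` of `G` meets exactly the bags in the union, over `v ∈ V(H)`, of the
subtrees `{t | v ∈ X t}`; these subtrees are connected and those of adjacent vertices of `H`
share a node, so the union is connected and the new bags form a tree decomposition of `G(ℋ)`.
For the independence number, pick in each bag `X'_t` a vertex of `H_j ∩ X_t` for every `j`:
non-adjacent indices of `G(ℋ)` have disjoint, non-touching subgraphs, so an independent set of
`G(ℋ)[X'_t]` is sent injectively to an independent set of `G[X_t]`.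
-/

namespace SimpleGraph

variable {ι W : Type*} {T : SimpleGraph ι}

theorem induce_iUnion_connected {K : SimpleGraph W} (hK : K.Connected) {s : W → Set ι}
    (hs : ∀ w, (T.induce (s w)).Connected)
    (hadj : ∀ ⦃v w⦄, K.Adj v w → (s v ∩ s w).Nonempty) :
    (T.induce (⋃ w, s w)).Connected := by
  have patch : ∀ w {x y : ι} (hx : x ∈ s w) (hy : y ∈ s w),
      (T.induce (⋃ w, s w)).Reachable ⟨x, Set.mem_iUnion_of_mem w hx⟩
        ⟨y, Set.mem_iUnion_of_mem w hy⟩ := fun w x y hx hy =>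
    ((hs w).preconnected ⟨x, hx⟩ ⟨y, hy⟩).map (T.induceHomOfLE (Set.subset_iUnion s w)).toHom
  have reach : ∀ {v w : W} (p : K.Walk v w) {x y : ι} (hx : x ∈ s v) (hy : y ∈ s w),
      (T.induce (⋃ w, s w)).Reachable ⟨x, Set.mem_iUnion_of_mem v hx⟩
        ⟨y, Set.mem_iUnion_of_mem w hy⟩ := by
    intro v w p
    induction p with
    | nil => exact patch _
    | cons h _ ih =>
      intro x y hx hy
      obtain ⟨z, hzv, hzw⟩ := hadj h
      exact (patch _ hx hzv).trans (ih hzw hy)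
  obtain ⟨w⟩ := hK.nonempty
  obtain ⟨⟨x, hx⟩⟩ := (hs w).nonempty
  refine (connected_iff _).2 ⟨?_, ⟨⟨x, Set.mem_iUnion_of_mem w hx⟩⟩⟩
  rintro ⟨x, hx⟩ ⟨y, hy⟩
  obtain ⟨v, hxv⟩ := Set.mem_iUnion.1 hx
  obtain ⟨w, hyw⟩ := Set.mem_iUnion.1 hy
  exact reach (hK.preconnected v w).some hxv hyw

end SimpleGraph

section IndependenceNumber

variable {W : Type*}

theorem bddAbove_indepSet_card [Finite V] (G : SimpleGraph V) (B : Set V) :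
    BddAbove {n | ∃ S : Finset V, ↑S ⊆ B ∧ G.IsIndepSetOn ↑S ∧ S.card = n} := by
  have := Fintype.ofFinite V
  exact ⟨Fintype.card V, by rintro _ ⟨S, -, -, rfl⟩; exact S.card_le_univ⟩

theorem indepNumOn_le_of_map [Finite V] {G : SimpleGraph V} {G' : SimpleGraph W}
    {A : Set W} {B : Set V} (f : A → V) (hfB : ∀ a, f a ∈ B)
    (hf : ∀ a b : A, a ≠ b → ¬ G'.Adj a b → f a ≠ f b ∧ ¬ G.Adj (f a) (f b)) :
    indepNumOn G' A ≤ indepNumOn G B := by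
  classical
  refine csSup_le ⟨0, ∅, by simp, by simp [SimpleGraph.IsIndepSetOn], rfl⟩ ?_
  rintro _ ⟨S, hSA, hS, rfl⟩
  let g : S → V := fun x => f ⟨x, hSA x.2⟩
  have hf' : ∀ x y : S, x ≠ y → g x ≠ g y ∧ ¬ G.Adj (g x) (g y) := fun x y hxy =>
    hf _ _ (fun h => hxy (Subtype.ext (Subtype.mk.inj h)))
      (hS x.2 y.2 fun h => hxy (Subtype.ext h))
  have hg : Function.Injective g := fun x y hxy => by_contra fun hne => (hf' x y hne).1 hxy
  refine le_csSup (bddAbove_indepSet_card G B) ⟨S.attach.image g, ?_, ?_, ?_⟩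
  · simp only [Finset.coe_image, Set.image_subset_iff]
    exact fun x _ => hfB _
  · simp only [Finset.coe_image]
    rintro _ ⟨x, -, rfl⟩ _ ⟨y, -, rfl⟩ hxy
    exact (hf' x y fun h => hxy (congrArg g h)).2
  · rw [Finset.card_image_of_injective _ hg, Finset.card_attach]

theorem decompIndepNum_le_of_forall_le {ι : Type*} [Finite ι] {G : SimpleGraph V}
    {G' : SimpleGraph W} {X : ι → Set V} {Y : ι → Set W}
    (h : ∀ t, indepNumOn G' (Y t) ≤ indepNumOn G (X t)) :
    decompIndepNum G' Y ≤ decompIndepNum G X :=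
  ciSup_mono (Set.finite_range _).bddAbove h

theorem packingGraph_adj_of_mem {J : Type*} {G : SimpleGraph V} {S : J → Set V} {i j : J}
    {u v : V} (hij : i ≠ j) (hu : u ∈ S i) (hv : v ∈ S j) (huv : u = v ∨ G.Adj u v) :
    (packingGraph G S).Adj i j := by
  refine ⟨hij, ?_⟩
  rcases huv with rfl | huv
  · exact Or.inl ⟨u, hu, hv⟩
  · exact Or.inr ⟨u, hu, v, hv, huv⟩

theorem indepNumOn_packingGraph_le [Finite V] {J : Type*} (G : SimpleGraph V) (S : J → Set V)
    (B : Set V) : indepNumOn (packingGraph G S) {j | (S j ∩ B).Nonempty} ≤ indepNumOn G B := by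
  refine indepNumOn_le_of_map (fun j => j.2.some) (fun j => j.2.some_mem.2) fun i j hij hadj => ?_
  have hij' : (i : J) ≠ j := fun h => hij (Subtype.ext h)
  have hi := i.2.some_mem.1
  have hj := j.2.some_mem.1
  exact ⟨fun h => hadj (packingGraph_adj_of_mem hij' hi hj (Or.inl h)),
    fun h => hadj (packingGraph_adj_of_mem hij' hi hj (Or.inr h))⟩

end IndependenceNumber

namespace IsTreeDecompOn

variable {ι : Type*} {G : SimpleGraph V} {T : SimpleGraph ι} {X : ι → Set V}

theorem induce_inter_nonempty_connected (hT : IsTreeDecompOn G T X) {H : G.Subgraph}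
    (hH : H.Connected) : (T.induce {t | (H.verts ∩ X t).Nonempty}).Connected := by
  have hunion : {t | (H.verts ∩ X t).Nonempty} = ⋃ v : H.verts, {t | (v : V) ∈ X t} := by
    ext t
    simp [Set.Nonempty]
  rw [hunion]
  exact induce_iUnion_connected hH.coe (fun v => hT.subtree_connected v)
    fun v w hvw => hT.exists_bag_edge (H.adj_sub hvw)

theorem packingGraph (hT : IsTreeDecompOn G T X) {J : Type*} {H : J → G.Subgraph}
    (hH : ∀ j, (H j).Connected) :
    IsTreeDecompOn (packingGraph G fun j => (H j).verts) T
      fun t => {j | ((H j).verts ∩ X t).Nonempty} where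
  isTree := hT.isTree
  exists_bag j := by
    obtain ⟨v, hv⟩ := (hH j).nonempty
    obtain ⟨t, ht⟩ := hT.exists_bag v
    exact ⟨t, v, hv, ht⟩
  exists_bag_edge := by
    rintro i j ⟨-, ⟨v, hvi, hvj⟩ | ⟨u, hu, v, hv, huv⟩⟩
    · obtain ⟨t, ht⟩ := hT.exists_bag v
      exact ⟨t, ⟨v, hvi, ht⟩, ⟨v, hvj, ht⟩⟩
    · obtain ⟨t, hut, hvt⟩ := hT.exists_bag_edge huv
      exact ⟨t, ⟨u, hu, hut⟩, ⟨v, hv, hvt⟩⟩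
  subtree_connected j := hT.induce_inter_nonempty_connected (hH j)

end IsTreeDecompOn

theorem stmt_0_general {V ι J : Type*} [Fintype V] [Finite ι]
    (G : SimpleGraph V) (T : SimpleGraph ι) (X : ι → Set V)
    (hT : IsTreeDecompOn G T X)
    (H : J → G.Subgraph) (hH : ∀ j, (H j).Connected) :
    IsTreeDecompOn (packingGraph G (fun j => (H j).verts)) T
      (fun t => {j | ((H j).verts ∩ X t).Nonempty}) ∧
    decompIndepNum (packingGraph G (fun j => (H j).verts))
      (fun t => {j | ((H j).verts ∩ X t).Nonempty}) ≤ decompIndepNum G X :=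
  ⟨hT.packingGraph hH, decompIndepNum_le_of_forall_le fun t => indepNumOn_packingGraph_le G _ (X t)⟩

theorem stmt_0 {V ι J : Type*} [Fintype V] [Finite ι] [Finite J]
    (G : SimpleGraph V) (T : SimpleGraph ι) (X : ι → Set V)
    (hT : IsTreeDecompOn G T X)
    (H : J → G.Subgraph) (hH : ∀ j, (H j).Connected) :
    IsTreeDecompOn (packingGraph G (fun j => (H j).verts)) T
      (fun t => {j | ((H j).verts ∩ X t).Nonempty}) ∧
    decompIndepNum (packingGraph G (fun j => (H j).verts))
      (fun t => {j | ((H j).verts ∩ X t).Nonempty}) ≤ decompIndepNum G X :=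
  stmt_0_general G T X hT H hH
end

section
/- Let G be a finite simple graph and let k be a positive integer. Then tree-α(G^{k+2}) ≤ tree-α(G^k). -/
open SimpleGraph

variable {V : Type*}

/-!
Replace every bag of a tree decomposition of `G^k` by its closed neighbourhood in `G`. Two vertices
at distance at most `k + 2` have closed neighbours at distance at most `k`,
which therefore share an old bag. The new bags containing `v` are the old subtrees of the closed
neighbours of `v`, each of which meets the subtree of `v` because `k ≥ 1`. Finally, sending each
vertex of a `G^(k+2)`-independent subset of a new bag to a neighbour in the old bag changes
distances by at most `2`, so it is injective with `G^k`-independent image.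
-/

namespace SimpleGraph

variable {G : SimpleGraph V} {u v : V} {k : ℕ}

lemma power_adj_iff_edist : (G.power k).Adj u v ↔ u ≠ v ∧ G.edist u v ≤ k := by
  refine and_congr_right fun _ => ⟨fun ⟨hr, hd⟩ => ?_, fun h => ?_⟩
  · rw [← hr.coe_dist_eq_edist]
    exact_mod_cast hd
  · have hr : G.Reachable u v := reachable_of_edist_ne_top (ne_top_of_le_ne_top (by simp) h)
    rw [← hr.coe_dist_eq_edist] at h
    exact ⟨hr, by exact_mod_cast h⟩

lemma exists_edist_le_one_edist_le (h : G.edist u v ≤ k + 1) :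
    ∃ w, G.edist u w ≤ 1 ∧ G.edist w v ≤ k := by
  obtain ⟨m, hm⟩ := ENat.ne_top_iff_exists.1 (ne_top_of_le_ne_top (by simp) h)
  obtain ⟨p, hp⟩ := exists_walk_of_edist_eq_coe hm.symm
  rw [← hm] at h
  cases p with
  | nil => exact ⟨u, by simp, by simp⟩
  | cons hadj q =>
    refine ⟨_, (edist_eq_one_iff_adj.2 hadj).le, (edist_le q).trans ?_⟩
    rw [Walk.length_cons] at hp
    have : m ≤ k + 1 := by exact_mod_cast h
    exact_mod_cast (show q.length ≤ k by omega)

lemma exists_edist_le_one_edist_le_one_edist_le (h : G.edist u v ≤ k + 2) :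
    ∃ u' v', G.edist u u' ≤ 1 ∧ G.edist v v' ≤ 1 ∧ G.edist u' v' ≤ k := by
  obtain ⟨u', huu', hu'v⟩ := exists_edist_le_one_edist_le (k := k + 1) (by exact_mod_cast h)
  rw [edist_comm] at hu'v
  obtain ⟨v', hvv', hv'u'⟩ := exists_edist_le_one_edist_le hu'v
  exact ⟨u', v', huu', hvv', by rwa [edist_comm]⟩

lemma lt_edist_of_edist_le_one {w w' a b : V} (ha : G.edist w a ≤ 1) (hb : G.edist w' b ≤ 1)
    (h : k + 2 < G.edist w w') : k < G.edist a b := by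
  by_contra! hab
  have : G.edist w w' ≤ 1 + k + 1 :=
    calc G.edist w w' ≤ G.edist w a + G.edist a b + G.edist b w' :=
          G.edist_triangle.trans (by gcongr; exact G.edist_triangle)
      _ ≤ 1 + k + 1 := by rw [edist_comm] at hb; gcongr
  exact h.not_ge (this.trans_eq (by ring))

def closedNbhd (G : SimpleGraph V) (X : Set V) : Set V :=
  {w | ∃ u ∈ X, G.edist w u ≤ 1}

lemma subset_closedNbhd (X : Set V) : X ⊆ G.closedNbhd X :=
  fun u hu => ⟨u, hu, by simp⟩

end SimpleGraph

open SimpleGraph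

lemma indepNumOn_le_of_forall_exists [Finite V] {G G' : SimpleGraph V} {X Y : Set V}
    (h : ∀ S : Finset V, ↑S ⊆ Y → G'.IsIndepSetOn ↑S →
      ∃ S' : Finset V, ↑S' ⊆ X ∧ G.IsIndepSetOn ↑S' ∧ S'.card = S.card) :
    indepNumOn G' Y ≤ indepNumOn G X := by
  have := Fintype.ofFinite V
  refine csSup_le_csSup ⟨Fintype.card V, ?_⟩ ⟨0, ∅, by simp, by simp [IsIndepSetOn], rfl⟩ ?_
  · rintro _ ⟨S, -, -, rfl⟩
    exact S.card_le_univ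
  · rintro _ ⟨S, hSY, hS, rfl⟩
    exact h S hSY hS

lemma indepNumOn_power_add_two_closedNbhd_le [Finite V] (G : SimpleGraph V) (k : ℕ) (X : Set V) :
    indepNumOn (G.power (k + 2)) (G.closedNbhd X) ≤ indepNumOn (G.power k) X := by
  classical
  refine indepNumOn_le_of_forall_exists fun S hSX hS => ?_
  have hnear : ∀ w ∈ S, ∃ u ∈ X, G.edist w u ≤ 1 := fun w hw => hSX hw
  choose! f hfX hf using hnear
  have hfar : ∀ w ∈ S, ∀ w' ∈ S, w ≠ w' → (k : ℕ∞) < G.edist (f w) (f w') := by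
    intro w hw w' hw' hne
    refine lt_edist_of_edist_le_one (hf w hw) (hf w' hw') (not_le.1 fun hle => ?_)
    exact hS hw hw' hne (power_adj_iff_edist.2 ⟨hne, by exact_mod_cast hle⟩)
  have hinj : Set.InjOn f S := by
    intro w hw w' hw' he
    by_contra hne
    simpa [he] using hfar w hw w' hw' hne
  refine ⟨S.image f, ?_, ?_, Finset.card_image_of_injOn hinj⟩
  · rw [Finset.coe_image, Set.image_subset_iff]
    exact hfX
  · rw [Finset.coe_image]
    rintro _ ⟨w, hw, rfl⟩ _ ⟨w', hw', rfl⟩ hne hadj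
    have hww' : w ≠ w' := fun e => hne (e ▸ rfl)
    exact (hfar w hw w' hw' hww').not_ge (power_adj_iff_edist.1 hadj).2

lemma decompIndepNum_mono {ι : Type*} [Finite ι] {G G' : SimpleGraph V} {X Y : ι → Set V}
    (h : ∀ t, indepNumOn G' (Y t) ≤ indepNumOn G (X t)) :
    decompIndepNum G' Y ≤ decompIndepNum G X :=
  Finite.ciSup_mono h

namespace IsTreeDecompOn

variable {ι : Type*} {G : SimpleGraph V} {T : SimpleGraph ι} {X : ι → Set V} {k : ℕ}

lemma exists_bag_of_edist_le (h : IsTreeDecompOn (G.power k) T X) {u v : V}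
    (huv : G.edist u v ≤ k) : ∃ t, u ∈ X t ∧ v ∈ X t := by
  by_cases hne : u = v
  · subst hne
    exact (h.exists_bag u).imp fun _ hu => ⟨hu, hu⟩
  · exact h.exists_bag_edge (power_adj_iff_edist.2 ⟨hne, huv⟩)

lemma connected_induce_closedNbhd (h : IsTreeDecompOn (G.power k) T X) (hk : 0 < k) (v : V) :
    (T.induce {t | v ∈ G.closedNbhd (X t)}).Connected := by
  obtain ⟨t₀, ht₀⟩ := h.exists_bag v
  refine T.induce_connected_of_patches t₀ (subset_closedNbhd _ ht₀) fun {t} ht => ?_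
  obtain ⟨w, hwX, hvw⟩ := ht
  obtain ⟨s, hvs, hws⟩ := h.exists_bag_of_edist_le (hvw.trans (by exact_mod_cast hk))
  refine ⟨{t | v ∈ X t} ∪ {t | w ∈ X t}, ?_, Or.inl ht₀, Or.inr hwX, ?_⟩
  · rintro t (hvt | hwt)
    exacts [subset_closedNbhd _ hvt, ⟨w, hwt, hvw⟩]
  · exact (induce_union_connected (h.subtree_connected v).preconnected
      (h.subtree_connected w).preconnected ⟨s, hvs, hws⟩).preconnected _ _

lemma power_add_two_closedNbhd (h : IsTreeDecompOn (G.power k) T X) (hk : 0 < k) :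
    IsTreeDecompOn (G.power (k + 2)) T fun t => G.closedNbhd (X t) where
  isTree := h.isTree
  exists_bag v := (h.exists_bag v).imp fun t => (subset_closedNbhd _ ·)
  exists_bag_edge u v huv := by
    obtain ⟨u', v', huu', hvv', hu'v'⟩ :=
      exists_edist_le_one_edist_le_one_edist_le (power_adj_iff_edist.1 huv).2
    obtain ⟨t, hu't, hv't⟩ := h.exists_bag_of_edist_le hu'v'
    exact ⟨t, ⟨u', hu't, huu'⟩, ⟨v', hv't, hvv'⟩⟩
  subtree_connected := h.connected_induce_closedNbhd hk

end IsTreeDecompOn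

lemma isTreeDecompOn_univ (G : SimpleGraph V) :
    IsTreeDecompOn G (⊥ : SimpleGraph Unit) fun _ => Set.univ where
  isTree := .of_subsingleton
  exists_bag _ := ⟨(), trivial⟩
  exists_bag_edge _ _ _ := ⟨(), trivial, trivial⟩
  subtree_connected _ := (@IsTree.of_subsingleton _ ⟨⟨(), trivial⟩⟩ _ _).connected

lemma exists_isTreeDecompOn_decompIndepNum_eq_treeIndepNum (G : SimpleGraph V) :
    ∃ (ι : Type) (T : SimpleGraph ι) (X : ι → Set V),
      Finite ι ∧ IsTreeDecompOn G T X ∧ decompIndepNum G X = treeIndepNum G :=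
  Nat.sInf_mem (s := {n | ∃ (ι : Type) (T : SimpleGraph ι) (X : ι → Set V),
    Finite ι ∧ IsTreeDecompOn G T X ∧ decompIndepNum G X = n})
    ⟨_, Unit, ⊥, _, inferInstance, isTreeDecompOn_univ G, rfl⟩

lemma treeIndepNum_le_decompIndepNum {G : SimpleGraph V} {ι : Type} {T : SimpleGraph ι}
    {X : ι → Set V} [Finite ι] (h : IsTreeDecompOn G T X) :
    treeIndepNum G ≤ decompIndepNum G X :=
  Nat.sInf_le ⟨ι, T, X, inferInstance, h, rfl⟩

theorem stmt_2 {V : Type*} [Fintype V] (G : SimpleGraph V) (k : ℕ) (hk : 0 < k) :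
    treeIndepNum (G.power (k + 2)) ≤ treeIndepNum (G.power k) := by
  obtain ⟨ι, T, X, hι, hX, hXα⟩ := exists_isTreeDecompOn_decompIndepNum_eq_treeIndepNum (G.power k)
  calc treeIndepNum (G.power (k + 2))
      ≤ decompIndepNum (G.power (k + 2)) fun t => G.closedNbhd (X t) :=
        treeIndepNum_le_decompIndepNum (hX.power_add_two_closedNbhd hk)
    _ ≤ decompIndepNum (G.power k) X :=
        decompIndepNum_mono fun t => indepNumOn_power_add_two_closedNbhd_le G k (X t)
    _ = treeIndepNum (G.power k) := hXα
end
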